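/- The fibers-to-angles and angles-to-fibers maps are mutually inverse for α: if f is constructed from the orthonormal frame (e_l, e_n, e_t) and angles α ∈ (−π, π], γ ∈ (−π/2, π/2) via f = cos α cos γ e_l + sin α cos γ e_n + sin γ e_t, then the projection f_LN = f − (f·e_t)e_t is nonzero and atan2(e_n · f_LN/‖f_LN‖, e_l · f_LN/‖f_LN‖) = α. -/

import Mathlib

open Real

/-- The two-argument arctangent with range `(-π, π]`. -/
noncomputable def atan2 (y x : ℝ) : ℝ := Complex.arg ⟨x, y⟩

/-!
Because `e_t` is orthogonal to `e_l` and `e_n`, removing the `e_t`-component leaves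
`f_LN = cos γ • (cos α • e_l + sin α • e_n)`. As `cos γ > 0` and the bracket is a unit vector,
normalising `f_LN` gives exactly that bracket, whose coordinates are `(cos α, sin α)`;
their argument is `α` because `α ∈ (-π, π]`.
-/

open RealInnerProductSpace

theorem atan2_sin_cos {α : ℝ} (hα : α ∈ Set.Ioc (-π) π) : atan2 (sin α) (cos α) = α := by
  have hz : (⟨cos α, sin α⟩ : ℂ) = Complex.cos α + Complex.sin α * Complex.I := by
    apply Complex.ext <;> simp [Complex.cos_ofReal_re, Complex.sin_ofReal_re]
  rw [atan2, hz]
  exact Complex.arg_cos_add_sin_mul_I hα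

section InnerProductSpace

variable {E : Type*} [NormedAddCommGroup E] [InnerProductSpace ℝ E]

theorem add_smul_sub_inner_smul_eq_of_inner_eq_zero {w e : E} (he : ‖e‖ = 1) (hw : ⟪w, e⟫ = 0)
    (s : ℝ) : (w + s • e) - ⟪w + s • e, e⟫ • e = w := by
  rw [inner_add_left, hw, real_inner_smul_left, real_inner_self_eq_norm_sq, he]
  simp

theorem norm_cos_smul_add_sin_smul {u v : E} (hu : ‖u‖ = 1) (hv : ‖v‖ = 1) (huv : ⟪u, v⟫ = 0)
    (α : ℝ) : ‖cos α • u + sin α • v‖ = 1 := by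
  have horth : ⟪cos α • u, sin α • v⟫ = 0 := by
    rw [real_inner_smul_left, real_inner_smul_right, huv, mul_zero, mul_zero]
  have hsq : ‖cos α • u + sin α • v‖ * ‖cos α • u + sin α • v‖ = 1 := by
    rw [norm_add_sq_eq_norm_sq_add_norm_sq_real horth, norm_smul, norm_smul, hu, hv,
      norm_eq_abs, norm_eq_abs, mul_one, mul_one, abs_mul_abs_self, abs_mul_abs_self,
      ← sq, ← sq, cos_sq_add_sin_sq]
  exact (mul_self_eq_one_iff.mp hsq).resolve_right
    (by linarith [norm_nonneg (cos α • u + sin α • v)])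

theorem inner_cos_smul_add_sin_smul_left {u v : E} (hu : ‖u‖ = 1) (huv : ⟪u, v⟫ = 0) (α : ℝ) :
    ⟪u, cos α • u + sin α • v⟫ = cos α := by
  simp [inner_add_right, real_inner_smul_right, hu, huv]

theorem inner_cos_smul_add_sin_smul_right {u v : E} (hv : ‖v‖ = 1) (huv : ⟪u, v⟫ = 0) (α : ℝ) :
    ⟪v, cos α • u + sin α • v⟫ = sin α := by
  simp [inner_add_right, real_inner_smul_right, hv, real_inner_comm u v ▸ huv]

end InnerProductSpace

/-- Fibers-to-angles inverts angles-to-fibers for `α`: if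
`f = cos α cos γ • e_l + sin α cos γ • e_n + sin γ • e_t` with `(e_l, e_n, e_t)`
orthonormal, `α ∈ (-π, π]`, `γ ∈ (-π/2, π/2)`, then the projection
`f_LN = f - (f·e_t) e_t` is nonzero and
`atan2(e_n · f_LN/‖f_LN‖, e_l · f_LN/‖f_LN‖) = α`. -/
theorem fibers_to_angles_recovers_alpha
    (el en et : EuclideanSpace ℝ (Fin 3)) (hON : Orthonormal ℝ ![el, en, et])
    (α γ : ℝ) (hα : α ∈ Set.Ioc (-π) π) (hγ : γ ∈ Set.Ioo (-(π / 2)) (π / 2))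
    (f : EuclideanSpace ℝ (Fin 3))
    (hf : f = (Real.cos α * Real.cos γ) • el + (Real.sin α * Real.cos γ) • en +
      Real.sin γ • et)
    (fLN : EuclideanSpace ℝ (Fin 3))
    (hfLN : fLN = f - (inner ℝ f et : ℝ) • et) :
    fLN ≠ 0 ∧
      atan2 (inner ℝ en (‖fLN‖⁻¹ • fLN) : ℝ) (inner ℝ el (‖fLN‖⁻¹ • fLN) : ℝ) = α := by
  have hel : ‖el‖ = 1 := by simpa using hON.1 0
  have hen : ‖en‖ = 1 := by simpa using hON.1 1
  have het : ‖et‖ = 1 := by simpa using hON.1 2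
  have h01 : ⟪el, en⟫ = 0 := by simpa using hON.inner_eq_zero (i := 0) (j := 1) (by decide)
  have h02 : ⟪el, et⟫ = 0 := by simpa using hON.inner_eq_zero (i := 0) (j := 2) (by decide)
  have h12 : ⟪en, et⟫ = 0 := by simpa using hON.inner_eq_zero (i := 1) (j := 2) (by decide)
  set u := cos α • el + sin α • en with hu_def
  have hu : ‖u‖ = 1 := norm_cos_smul_add_sin_smul hel hen h01 α
  have hcγ : 0 < cos γ := cos_pos_of_mem_Ioo hγ
  have hut : ⟪cos γ • u, et⟫ = 0 := by
    simp [hu_def, inner_add_left, real_inner_smul_left, h02, h12]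
  have hf' : f = cos γ • u + sin γ • et := by rw [hf, hu_def]; module
  have hLN : fLN = cos γ • u := by
    rw [hfLN, hf', add_smul_sub_inner_smul_eq_of_inner_eq_zero het hut]
  have hnorm : ‖fLN‖ = cos γ := by rw [hLN, norm_smul, hu, norm_of_nonneg hcγ.le, mul_one]
  have hunit : ‖fLN‖⁻¹ • fLN = u := by rw [hnorm, hLN, inv_smul_smul₀ hcγ.ne']
  refine ⟨norm_pos_iff.mp (hnorm ▸ hcγ), ?_⟩
  rw [hunit, inner_cos_smul_add_sin_smul_left hel h01, inner_cos_smul_add_sin_smul_right hen h01]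
  exact atan2_sin_cos hα
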